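/- arXiv:2109.15307 — 4 statements merged into one kernel-verified Lean document; each statement's English description precedes it below -/
import Mathlib

section
/- Let G be a group and λ : G × G → {0,1} ⊂ ℤ a function whose mod-2 reduction is a 2-cocycle, i.e., d̂λ(g,h,k) := λ(h,k) - λ(gh,k) + λ(g,hk) - λ(g,h) is even for all g,h,k. Then for all g,h,k ∈ G, λ(h,k)·λ(g,hk) - λ(g,h)·λ(gh,k) ≡ d̂λ(g,h,k)/2 (mod 2). In other words, λ ∪₁ λ ≡ (1/2) d̂λ (mod 2). -/
/-! For `x ∈ {0,1}` one has `x² = x`, so with `a = λ(h,k)`, `b = λ(gh,k)`, `c = λ(g,hk)`,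
`d = λ(g,h)` and `d̂λ = a - b + c - d`,
`2(ac - db) = (a + c)² - (b + d)² - d̂λ = d̂λ (d̂λ + 2(b + d)) - d̂λ`.
Writing `d̂λ = 2m` and halving gives `ac - db = 2m(m + b + d) - m ≡ m (mod 2)`. -/

namespace Int

theorem mul_sub_mul_eq_of_isIdempotentElem {a b c d m : ℤ} (ha : IsIdempotentElem a)
    (hb : IsIdempotentElem b) (hc : IsIdempotentElem c) (hd : IsIdempotentElem d)
    (hm : a - b + c - d = m + m) :
    a * c - d * b = 2 * (m * (m + b + d)) - m := by
  refine mul_left_cancel₀ two_ne_zero ?_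
  unfold IsIdempotentElem at ha hb hc hd
  linear_combination (a + b + c + d + 2 * m - 1) * hm - ha - hc + hb + hd

theorem mul_sub_mul_modEq_half_of_isIdempotentElem {a b c d : ℤ} (ha : IsIdempotentElem a)
    (hb : IsIdempotentElem b) (hc : IsIdempotentElem c) (hd : IsIdempotentElem d)
    (heven : Even (a - b + c - d)) :
    a * c - d * b ≡ (a - b + c - d) / 2 [ZMOD 2] := by
  obtain ⟨m, hm⟩ := heven
  rw [mul_sub_mul_eq_of_isIdempotentElem ha hb hc hd hm, hm, Int.ModEq]
  omega

end Int

/-- For a `{0,1}`-valued function `λ` on `G × G` whose integer coboundary `d̂λ` is even,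
one has `λ∪₁λ ≡ (1/2)·d̂λ (mod 2)`, i.e.
`λ(h,k)λ(g,hk) - λ(g,h)λ(gh,k) ≡ d̂λ(g,h,k)/2 (mod 2)`. -/
theorem stmt_11 {G : Type*} [Group G] (lam : G → G → ℤ)
    (hval : ∀ g h : G, lam g h = 0 ∨ lam g h = 1)
    (heven : ∀ g h k : G,
      Even (lam h k - lam (g * h) k + lam g (h * k) - lam g h)) :
    ∀ g h k : G,
      Int.ModEq 2 (lam h k * lam g (h * k) - lam g h * lam (g * h) k)
        ((lam h k - lam (g * h) k + lam g (h * k) - lam g h) / 2) := by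
  have hidem (g h : G) : IsIdempotentElem (lam g h) :=
    IsIdempotentElem.iff_eq_zero_or_one.2 (hval g h)
  intro g h k
  exact Int.mul_sub_mul_modEq_half_of_isIdempotentElem
    (hidem h k) (hidem (g * h) k) (hidem g (h * k)) (hidem g h) (heven g h k)
end

section
/- Let G be a group, n₁ : G → ℤ/2 a group homomorphism (1-cocycle) and λ : G × G → ℤ/2 a 2-cocycle. Then the function O₃(g,h,k) = n₁(g)·λ(h,k) + λ(h,k)·λ(g,hk) - λ(g,h)·λ(gh,k) (mod 2) is a 3-cocycle: dO₃(g,h,k,l) := O₃(h,k,l) - O₃(gh,k,l) + O₃(g,hk,l) - O₃(g,h,kl) + O₃(g,h,k) ≡ 0 (mod 2) for all g,h,k,l ∈ G. -/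
/-!
Both summands of `O₃` are cocycles over any commutative coefficient ring; no reduction mod 2
is needed. Since `n₁` is additive, the Leibniz rule gives `d(n₁ ∪ λ) = -n₁ ∪ dλ = 0`. For
`λ ∪₁ λ`, the coboundary formula for the `∪₁` product of two closed 2-cochains `a, b` leaves
only `± (a ∪ b - b ∪ a)`, which vanishes when `a = b = λ`.
-/

/-- The obstruction 3-cochain `O₃ = n₁∪λ + λ∪₁λ`. -/
def O3 {G : Type*} [Group G] (n1 : G → ZMod 2) (lam : G → G → ZMod 2) :
    G → G → G → ZMod 2 :=
  fun g h k => n1 g * lam h k + lam h k * lam g (h * k) - lam g h * lam (g * h) k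

namespace GroupCochain

variable {G R : Type*} [Group G] [CommRing R]

def coboundary₂ (f : G → G → R) (g h k : G) : R :=
  f h k - f (g * h) k + f g (h * k) - f g h

def coboundary₃ (f : G → G → G → R) (g h k l : G) : R :=
  f h k l - f (g * h) k l + f g (h * k) l - f g h (k * l) + f g h k

def cup (n : G → R) (f : G → G → R) (g h k : G) : R :=
  n g * f h k

def cupOne (a b : G → G → R) (g h k : G) : R :=
  a g (h * k) * b h k - a (g * h) k * b g h

theorem coboundary₃_add (f f' : G → G → G → R) (g h k l : G) :
    coboundary₃ (f + f') g h k l = coboundary₃ f g h k l + coboundary₃ f' g h k l := by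
  simp only [coboundary₃, Pi.add_apply]
  ring

theorem coboundary₃_cup {n : G → R} (hn : ∀ g h, n (g * h) = n g + n h) (f : G → G → R)
    (g h k l : G) : coboundary₃ (cup n f) g h k l = -(n g * coboundary₂ f h k l) := by
  simp only [coboundary₃, coboundary₂, cup, hn]
  ring

theorem coboundary₃_cup_of_cocycle {n : G → R} (hn : ∀ g h, n (g * h) = n g + n h)
    {f : G → G → R} (hf : ∀ g h k, coboundary₂ f g h k = 0) (g h k l : G) :
    coboundary₃ (cup n f) g h k l = 0 := by
  rw [coboundary₃_cup hn, hf, mul_zero, neg_zero]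

theorem coboundary₃_cupOne_self {f : G → G → R} (hf : ∀ g h k, coboundary₂ f g h k = 0)
    (g h k l : G) : coboundary₃ (cupOne f f) g h k l = 0 := by
  have hhkl := hf h k l
  have hghk := hf g h k
  have hg_hk_l := hf g (h * k) l
  have hg_h_kl := hf g h (k * l)
  have hgh_k_l := hf (g * h) k l
  simp only [coboundary₃, coboundary₂, cupOne, mul_assoc]
    at hhkl hghk hg_hk_l hg_h_kl hgh_k_l ⊢
  linear_combination f k l * hg_h_kl - f g (h * (k * l)) * hhkl + f g h * hgh_k_l
    - f h k * hg_hk_l - f (g * (h * k)) l * hghk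

end GroupCochain

theorem O3_eq_cup_add_cupOne {G : Type*} [Group G] (n1 : G → ZMod 2) (lam : G → G → ZMod 2) :
    O3 n1 lam = GroupCochain.cup n1 lam + GroupCochain.cupOne lam lam := by
  funext g h k
  simp only [O3, GroupCochain.cup, GroupCochain.cupOne, Pi.add_apply]
  ring

/-- If `n₁ : G → ℤ/2` is a homomorphism and `λ` a `ℤ/2`-valued 2-cocycle, then
`O₃ = n₁∪λ + λ∪₁λ` is a 3-cocycle. -/
theorem stmt_12 {G : Type*} [Group G] (n1 : G → ZMod 2) (lam : G → G → ZMod 2)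
    (hn1 : ∀ g h : G, n1 (g * h) = n1 g + n1 h)
    (hcoc : ∀ g h k : G, lam h k - lam (g * h) k + lam g (h * k) - lam g h = 0) :
    ∀ g h k l : G,
      O3 n1 lam h k l - O3 n1 lam (g * h) k l + O3 n1 lam g (h * k) l
          - O3 n1 lam g h (k * l) + O3 n1 lam g h k = 0 := by
  intro g h k l
  change GroupCochain.coboundary₃ (O3 n1 lam) g h k l = 0
  rw [O3_eq_cup_add_cupOne, GroupCochain.coboundary₃_add,
    GroupCochain.coboundary₃_cup_of_cocycle hn1 hcoc,
    GroupCochain.coboundary₃_cupOne_self hcoc, add_zero]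
end

section
/- Let G be a group and λ : G × G → {0,1} a function whose mod-2 reduction is a 2-cocycle. Regard λ as taking values in ℤ/4 via the inclusion {0,1} ⊂ ℤ/4, let d̂λ denote the integer coboundary of λ, and define the Pontryagin square P(λ) = λ∪λ + λ∪₁d̂λ, where λ∪₁d̂λ is given by the standard cup-1 formula for a 2-cochain and a 3-cochain. Then P(λ) is a 4-cocycle with values in ℤ/4: its coboundary vanishes mod 4. -/
/-- Integer-valued (un-reduced) coboundary of a 2-cochain:
`d̂λ(g,h,k) = λ(h,k) - λ(gh,k) + λ(g,hk) - λ(g,h)`. -/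
def dhat {G : Type*} [Group G] (lam : G → G → ℤ) : G → G → G → ℤ :=
  fun g h k => lam h k - lam (g * h) k + lam g (h * k) - lam g h

/-- The Pontryagin square `P(λ) = λ∪λ + λ∪₁d̂λ` of a `{0,1}`-valued 2-cochain, where the
cup-1 product of the 2-cochain `λ` and the 3-cochain `d̂λ` follows the Steenrod formula:
`λ∪₁d̂λ(g₁,g₂,g₃,g₄) = d̂λ(g₁,g₂,g₃)·λ(g₁g₂g₃,g₄) + d̂λ(g₂,g₃,g₄)·λ(g₁,g₂g₃g₄)`. -/
def pont {G : Type*} [Group G] (lam : G → G → ℤ) : G → G → G → G → ℤ :=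
  fun g h k l =>
    lam g h * lam k l
      + dhat lam g h k * lam (g * h * k) l
      + dhat lam h k l * lam g (h * k * l)

/-- If `λ` takes values in `{0,1}` and its mod-2 reduction is a 2-cocycle (so `d̂λ` is
even), then the Pontryagin square `P(λ)` is a 4-cocycle with values in `ℤ/4`: its
coboundary vanishes mod 4. -/
theorem stmt_14 {G : Type*} [Group G] (lam : G → G → ℤ)
    (hval : ∀ g h : G, lam g h = 0 ∨ lam g h = 1)
    (heven : ∀ g h k : G, Even (dhat lam g h k)) :
    ∀ g1 g2 g3 g4 g5 : G,
      (4 : ℤ) ∣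
        (pont lam g2 g3 g4 g5 - pont lam (g1 * g2) g3 g4 g5
          + pont lam g1 (g2 * g3) g4 g5 - pont lam g1 g2 (g3 * g4) g5
          + pont lam g1 g2 g3 (g4 * g5) - pont lam g1 g2 g3 g4) := by
  intro g1 g2 g3 g4 g5
  obtain ⟨a, ha⟩ := heven g3 g4 g5
  obtain ⟨b, hb⟩ := heven (g1 * g2 * g3) g4 g5
  obtain ⟨c, hc⟩ := heven g1 g2 g3
  obtain ⟨d, hd⟩ := heven g1 (g2 * g3 * g4) g5
  obtain ⟨e, he⟩ := heven g2 g3 g4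
  obtain ⟨f, hf⟩ := heven g1 g2 (g3 * g4 * g5)
  have key : (pont lam g2 g3 g4 g5 - pont lam (g1 * g2) g3 g4 g5
          + pont lam g1 (g2 * g3) g4 g5 - pont lam g1 g2 (g3 * g4) g5
          + pont lam g1 g2 g3 (g4 * g5) - pont lam g1 g2 g3 g4)
      = 2 * lam g1 g2 * dhat lam g3 g4 g5
        + dhat lam (g1 * g2 * g3) g4 g5 * dhat lam g1 g2 g3
        + dhat lam g1 (g2 * g3 * g4) g5 * dhat lam g2 g3 g4
        + dhat lam g1 g2 (g3 * g4 * g5) * dhat lam g3 g4 g5 := by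
    simp only [pont, dhat, mul_assoc]
    ring
  rw [key, ha, hb, hc, hd, he, hf]
  exact ⟨lam g1 g2 * a + b * c + d * e + (f) * a, by ring⟩
end

section
/- Let G = ∏_{i=1}^k ℤ/N_i with all N_i even. Let λ = Σ_i p_i w_i + Σ_{i<j} p_{ij} w_{ij} (mod 2), where p_i, p_{ij} ∈ {0,1}, w_i(a,b) = (a_i + b_i - [a_i+b_i]_{N_i})/N_i, and w_{ij}(a,b) = a_i b_j mod 2. Then the invariants Ω_i(λ) := Σ_{n=0}^{N_i-1} λ(n·e_i, e_i) (mod 2) and Ω_{ij}(λ) := λ(e_i,e_j) - λ(e_j,e_i) (mod 2) evaluate to Ω_i(λ) = p_i and Ω_{ij}(λ) = p_{ij} for i < j. -/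
/-!
Both cocycles vanish as soon as one argument has a zero coordinate at the relevant index. On
pairs `(n • eᵢ, eᵢ)` only `wᵢ` survives, and it is the carry of `n + 1` in `ℤ/Nᵢ`, which equals
`1` exactly once in a period, at `n = Nᵢ - 1`. On `(eᵢ, eⱼ)` with `i ≠ j` only `w_{ij}` survives,
and only in the order `i < j`.
-/

/-- The 2-cocycle `w_i(a,b) = (a_i + b_i - [a_i+b_i]_{N_i})/N_i` on `∏ₗ ℤ/Nₗ`,
valued in `ℤ/2`. -/
def wI {k : ℕ} (N : Fin k → ℕ) (i : Fin k) (a b : ∀ l, ZMod (N l)) : ZMod 2 :=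
  (((((a i).val + (b i).val - (a i + b i).val) / N i : ℕ)) : ZMod 2)

/-- The 2-cocycle `w_{ij}(a,b) = a_i b_j (mod 2)` on `∏ₗ ℤ/Nₗ`. -/
def wIJ {k : ℕ} (N : Fin k → ℕ) (i j : Fin k) (a b : ∀ l, ZMod (N l)) : ZMod 2 :=
  ((((a i).val * (b j).val : ℕ)) : ZMod 2)

/-- The general 2-cocycle `λ = Σᵢ pᵢ wᵢ + Σ_{i<j} p_{ij} w_{ij}` on `∏ₗ ℤ/Nₗ`. -/
def lamP {k : ℕ} (N : Fin k → ℕ) (p : Fin k → ZMod 2) (pij : Fin k → Fin k → ZMod 2)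
    (a b : ∀ l, ZMod (N l)) : ZMod 2 :=
  (∑ i, p i * wI N i a b) + ∑ i, ∑ j, if i < j then pij i j * wIJ N i j a b else 0

section Cocycles

variable {k : ℕ} {N : Fin k → ℕ} {a b : ∀ l, ZMod (N l)} {i j : Fin k}

lemma wI_eq_zero_of_left (h : a i = 0) : wI N i a b = 0 := by
  simp [wI, h]

lemma wI_eq_zero_of_right (h : b i = 0) : wI N i a b = 0 := by
  simp [wI, h]

lemma wIJ_eq_zero_of_left (h : a i = 0) : wIJ N i j a b = 0 := by
  simp [wIJ, h]

lemma wIJ_eq_zero_of_right (h : b j = 0) : wIJ N i j a b = 0 := by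
  simp [wIJ, h]

lemma lamP_of_support_subset_singleton (p : Fin k → ZMod 2) (pij : Fin k → Fin k → ZMod 2)
    (ha : ∀ l ≠ i, a l = 0) (hb : ∀ l ≠ i, b l = 0) :
    lamP N p pij a b = p i * wI N i a b := by
  have hw : ∑ l, ∑ m, (if l < m then pij l m * wIJ N l m a b else 0) = 0 := by
    refine Finset.sum_eq_zero fun l _ => Finset.sum_eq_zero fun m _ => ?_
    split_ifs with hlm
    · rcases eq_or_ne l i with rfl | hl
      · rw [wIJ_eq_zero_of_right (hb m hlm.ne'), mul_zero]
      · rw [wIJ_eq_zero_of_left (ha l hl), mul_zero]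
    · rfl
  rw [lamP, hw, add_zero, Finset.sum_eq_single_of_mem i (Finset.mem_univ i)]
  intro l _ hl
  rw [wI_eq_zero_of_left (ha l hl), mul_zero]

lemma lamP_of_support_subset_pair (p : Fin k → ZMod 2) (pij : Fin k → Fin k → ZMod 2)
    (hij : i ≠ j) (ha : ∀ l ≠ i, a l = 0) (hb : ∀ l ≠ j, b l = 0) :
    lamP N p pij a b = if i < j then pij i j * wIJ N i j a b else 0 := by
  have hw : ∑ l, p l * wI N l a b = 0 := by
    refine Finset.sum_eq_zero fun l _ => ?_
    rcases eq_or_ne l i with rfl | hl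
    · rw [wI_eq_zero_of_right (hb l hij), mul_zero]
    · rw [wI_eq_zero_of_left (ha l hl), mul_zero]
  rw [lamP, hw, zero_add, Finset.sum_eq_single_of_mem i (Finset.mem_univ i),
    Finset.sum_eq_single_of_mem j (Finset.mem_univ j)]
  · intro m _ hm
    rw [wIJ_eq_zero_of_right (hb m hm), mul_zero, ite_self]
  · intro l _ hl
    refine Finset.sum_eq_zero fun m _ => ?_
    rw [wIJ_eq_zero_of_left (ha l hl), mul_zero, ite_self]

end Cocycles

lemma ZMod.val_natCast_add_val_one_sub_div {N n : ℕ} [Fact (1 < N)] (hn : n < N) :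
    ((n : ZMod N).val + (1 : ZMod N).val - ((n : ZMod N) + 1).val) / N
      = if n = N - 1 then 1 else 0 := by
  rw [ZMod.val_natCast_of_lt hn, ZMod.val_one, ← Nat.cast_add_one]
  split_ifs with h
  · have hN : n + 1 = N := by omega
    rw [hN, ZMod.natCast_self, ZMod.val_zero, Nat.sub_zero,
      Nat.div_self (by have := Fact.out (p := 1 < N); omega)]
  · rw [ZMod.val_natCast_of_lt (by omega), Nat.sub_self, Nat.zero_div]

/-- For `G = ∏ᵢ ℤ/Nᵢ` with all `Nᵢ` even and `λ = Σᵢ pᵢ wᵢ + Σ_{i<j} p_{ij} w_{ij}`,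
the invariants evaluate to `Ωᵢ(λ) = Σ_{n<Nᵢ} λ(n·eᵢ, eᵢ) = pᵢ` and, for `i < j`,
`Ω_{ij}(λ) = λ(eᵢ,eⱼ) - λ(eⱼ,eᵢ) = p_{ij}`. -/
theorem stmt_19 {k : ℕ} (N : Fin k → ℕ) (hpos : ∀ i, 0 < N i) (heven : ∀ i, Even (N i))
    (p : Fin k → ZMod 2) (pij : Fin k → Fin k → ZMod 2) :
    (∀ i : Fin k,
      (∑ n ∈ Finset.range (N i),
          lamP N p pij (n • Pi.single i (1 : ZMod (N i))) (Pi.single i (1 : ZMod (N i))))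
        = p i)
    ∧ ∀ i j : Fin k, i < j →
        lamP N p pij (Pi.single i (1 : ZMod (N i))) (Pi.single j (1 : ZMod (N j)))
            - lamP N p pij (Pi.single j (1 : ZMod (N j))) (Pi.single i (1 : ZMod (N i)))
          = pij i j := by
  have hN (l : Fin k) : Fact (1 < N l) := ⟨by obtain ⟨m, hm⟩ := heven l; have := hpos l; omega⟩
  refine ⟨fun i => ?_, fun i j hij => ?_⟩
  · calc _ = ∑ n ∈ Finset.range (N i), p i * ((if n = N i - 1 then 1 else 0 : ℕ) : ZMod 2) := by
          refine Finset.sum_congr rfl fun n hn => ?_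
          rw [lamP_of_support_subset_singleton (i := i) p pij (fun l hl => by simp [hl])
            (fun l hl => by simp [hl]), wI, ← ZMod.val_natCast_add_val_one_sub_div
            (Finset.mem_range.mp hn)]
          simp
      _ = p i := by simp [Finset.sum_ite_eq', hpos i]
  · rw [lamP_of_support_subset_pair p pij hij.ne (fun l hl => by simp [hl])
      (fun l hl => by simp [hl]), lamP_of_support_subset_pair p pij hij.ne'
      (fun l hl => by simp [hl]) (fun l hl => by simp [hl]), if_pos hij, if_neg hij.not_gt]
    simp [wIJ, ZMod.val_one]
end
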